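/- arXiv:1207.6143 — 2 statements merged into one kernel-verified Lean document; each statement's English description precedes it below -/
import Mathlib

section
/- Let B be a finite Blaschke product of degree n whose zeros all satisfy |a_k| ≤ r < 1, and let e^{iα}, e^{iβ} with α < β < α + 2π be two consecutive solutions of zB(z) = 1 on the unit circle. Then ∫_α^β (1 + |B'(e^{it})|) dt = 2π. -/
/-!
On the unit circle `t ↦ e^{it} B(e^{it})` has logarithmic derivative `i h(t)`, where
`h(t) = 1 + ∑ₖ (1 - |aₖ|²) / |e^{it} - aₖ|²`; each Blaschke factor contributes its Poisson
kernel. Hence `e^{it} B(e^{it}) = e^{i G(t)}` with `G(t) = ∫_α^t h` and `G(α) = 0`, so the solutions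
of `z B(z) = 1` are the points where `G ∈ 2πℤ`. As `h > 0`, `G(β)` is a positive multiple of `2π`,
and by the intermediate value theorem it cannot exceed `2π` without a solution strictly between
`α` and `β`.
-/

open Complex

section LogarithmicDerivative

variable {ι 𝕜 𝔸 : Type*} [NontriviallyNormedField 𝕜] [NormedCommRing 𝔸] [NormedAlgebra 𝕜 𝔸]

theorem HasDerivAt.fun_finsetProd_of_eq_mul [DecidableEq ι] {u : Finset ι} {f : ι → 𝕜 → 𝔸}
    {c : ι → 𝔸} {x : 𝕜} (hf : ∀ i ∈ u, HasDerivAt (f i) (c i * f i x) x) :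
    HasDerivAt (fun y => ∏ i ∈ u, f i y) ((∑ i ∈ u, c i) * ∏ i ∈ u, f i x) x := by
  induction u using Finset.induction_on with
  | empty => simpa using hasDerivAt_const x (1 : 𝔸)
  | insert i u hi ih =>
    simp only [Finset.prod_insert hi, Finset.sum_insert hi]
    refine ((hf i (Finset.mem_insert_self i u)).fun_mul
      (ih fun j hj => hf j (Finset.mem_insert_of_mem hj))).congr_deriv ?_
    ring

end LogarithmicDerivative

theorem eq_mul_exp_integral_of_hasDerivAt {f g : ℝ → ℂ} (hg : Continuous g)
    (hf : ∀ t, HasDerivAt f (g t * f t) t) (α t : ℝ) :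
    f t = f α * exp (∫ s in α..t, g s) := by
  set G : ℝ → ℂ := fun t => ∫ s in α..t, g s
  have hG : ∀ t, HasDerivAt G (g t) t := fun t => (hg.integral_hasStrictDerivAt α t).hasDerivAt
  have hconst : ∀ t, HasDerivAt (fun s => f s * exp (-G s)) 0 t := fun t => by
    refine ((hf t).fun_mul (hG t).neg.cexp).congr_deriv ?_
    simp only [Pi.neg_apply]
    ring
  have key := is_const_of_deriv_eq_zero (fun t => (hconst t).differentiableAt)
    (fun t => (hconst t).deriv) t α
  simp only [G, intervalIntegral.integral_same, neg_zero, exp_zero, mul_one] at key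
  rw [← key, mul_assoc, ← exp_add, neg_add_cancel, exp_zero, mul_one]

theorem eq_two_pi_of_exp_mul_I_ne_one_on_Ioo {G : ℝ → ℝ} {α β : ℝ} (hαβ : α ≤ β)
    (hG : ContinuousOn G (Set.Icc α β)) (hGα : G α = 0) (hGβ : 0 < G β)
    (hβ : exp (G β * I) = 1) (hne : ∀ t ∈ Set.Ioo α β, exp (G t * I) ≠ 1) :
    G β = 2 * Real.pi := by
  obtain ⟨m, hm⟩ := exp_eq_one_iff.1 hβ
  have hGm : G β = m * (2 * Real.pi) := by simpa using congrArg im hm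
  have hπ := Real.pi_pos
  have hm1 : 1 ≤ m := by
    by_contra! h
    have : (m : ℝ) ≤ 0 := by exact_mod_cast Int.lt_add_one_iff.1 h
    nlinarith
  suffices m ≤ 1 by rw [hGm, show m = 1 by omega]; simp
  by_contra! h
  have hm2 : (2 : ℝ) ≤ m := by exact_mod_cast h
  obtain ⟨t, ht, hGt⟩ := intermediate_value_Icc hαβ hG
    (show 2 * Real.pi ∈ Set.Icc (G α) (G β) by constructor <;> nlinarith)
  have htα : t ≠ α := by rintro rfl; linarith
  have htβ : t ≠ β := by rintro rfl; nlinarith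
  refine hne t ⟨lt_of_le_of_ne ht.1 htα.symm, lt_of_le_of_ne ht.2 htβ⟩ ?_
  rw [hGt]
  push_cast
  exact exp_two_pi_mul_I

open ComplexConjugate

section UnitCircle

theorem hasDerivAt_exp_ofReal_mul_I (t : ℝ) :
    HasDerivAt (fun s : ℝ => exp (s * I)) (I * exp (t * I)) t := by
  simpa [mul_comm] using ((hasDerivAt_id (t : ℂ)).mul_const I).cexp.comp_ofReal

variable {a z : ℂ}

theorem exp_ofReal_mul_I_sub_ne_zero (ha : ‖a‖ < 1) (t : ℝ) : exp (t * I) - a ≠ 0 := by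
  rw [sub_ne_zero]
  rintro rfl
  simp at ha

theorem one_sub_conj_mul_ne_zero (ha : ‖a‖ < 1) (hz : ‖z‖ = 1) : 1 - conj a * z ≠ 0 := by
  intro h
  have : ‖conj a * z‖ = 1 := by rw [← sub_eq_zero.1 h, norm_one]
  rw [norm_mul, RCLike.norm_conj, hz, mul_one] at this
  exact ha.ne this

theorem ofReal_norm_sub_sq_of_norm_eq_one (hz : ‖z‖ = 1) :
    ((‖z - a‖ ^ 2 : ℝ) : ℂ) = (z - a) * (1 - conj a * z) / z := by
  have hz0 : z ≠ 0 := norm_ne_zero_iff.1 (by rw [hz]; exact one_ne_zero)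
  have hzz : z * conj z = 1 := by rw [mul_conj, normSq_eq_norm_sq, hz]; simp
  rw [← normSq_eq_norm_sq, ← mul_conj, map_sub, eq_div_iff hz0]
  linear_combination (z - a) * hzz

theorem hasDerivAt_blaschkeFactor_exp_ofReal_mul_I (ha : ‖a‖ < 1) (t : ℝ) :
    HasDerivAt (fun s : ℝ => (exp (s * I) - a) / (1 - conj a * exp (s * I)))
      (((1 - ‖a‖ ^ 2) / ‖exp (t * I) - a‖ ^ 2 : ℝ) * I *
        ((exp (t * I) - a) / (1 - conj a * exp (t * I)))) t := by
  have hz : ‖exp (t * I)‖ = 1 := norm_exp_ofReal_mul_I t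
  have hden := one_sub_conj_mul_ne_zero ha hz
  have hnum := exp_ofReal_mul_I_sub_ne_zero ha t
  refine (((hasDerivAt_exp_ofReal_mul_I t).sub_const a).div
    (((hasDerivAt_exp_ofReal_mul_I t).const_mul (conj a)).const_sub 1) hden).congr_deriv ?_
  have ha2 : ((‖a‖ ^ 2 : ℝ) : ℂ) = a * conj a := by rw [mul_conj, normSq_eq_norm_sq]
  have hz0 : exp (t * I) ≠ 0 := exp_ne_zero _
  rw [ofReal_div, ofReal_sub, ofReal_one, ofReal_norm_sub_sq_of_norm_eq_one hz, ha2]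
  generalize exp (t * I) = z at *
  field_simp
  ring

theorem hasDerivAt_blaschkeProduct_exp_ofReal_mul_I {ι : Type*} [Fintype ι] {a : ι → ℂ}
    (ha : ∀ k, ‖a k‖ < 1) (t : ℝ) :
    HasDerivAt (fun s : ℝ => ∏ k, (exp (s * I) - a k) / (1 - conj (a k) * exp (s * I)))
      ((∑ k, (1 - ‖a k‖ ^ 2) / ‖exp (t * I) - a k‖ ^ 2 : ℝ) * I *
        ∏ k, (exp (t * I) - a k) / (1 - conj (a k) * exp (t * I))) t := by
  classical
  refine (HasDerivAt.fun_finsetProd_of_eq_mul fun k _ =>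
    hasDerivAt_blaschkeFactor_exp_ofReal_mul_I (ha k) t).congr_deriv ?_
  push_cast
  simp only [Finset.sum_mul]

theorem continuous_poisson_exp_ofReal_mul_I (ha : ‖a‖ < 1) :
    Continuous fun t : ℝ => (1 - ‖a‖ ^ 2) / ‖exp (t * I) - a‖ ^ 2 :=
  continuous_const.div (by fun_prop) fun t => by
    simpa using exp_ofReal_mul_I_sub_ne_zero ha t

end UnitCircle

theorem consecutive_prevertices_integral_general (n : ℕ) (r : ℝ) (hr : r < 1)
    (a : Fin n → ℂ) (ha : ∀ k, ‖a k‖ ≤ r) (B : ℂ → ℂ)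
    (hB : ∀ z : ℂ, B z = ∏ k, (z - a k) / (1 - (starRingEnd ℂ) (a k) * z))
    (α β : ℝ) (hαβ : α < β)
    (hα1 : Complex.exp (α * Complex.I) * B (Complex.exp (α * Complex.I)) = 1)
    (hβ1 : Complex.exp (β * Complex.I) * B (Complex.exp (β * Complex.I)) = 1)
    (hcons : ∀ t : ℝ, α < t → t < β →
      Complex.exp (t * Complex.I) * B (Complex.exp (t * Complex.I)) ≠ 1) :
    (∫ t in α..β,
        (1 + ∑ k, (1 - ‖a k‖ ^ 2) / ‖Complex.exp (t * Complex.I) - a k‖ ^ 2))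
      = 2 * Real.pi := by
  have ha1 : ∀ k, ‖a k‖ < 1 := fun k => (ha k).trans_lt hr
  set h : ℝ → ℝ := fun t => 1 + ∑ k, (1 - ‖a k‖ ^ 2) / ‖exp (t * I) - a k‖ ^ 2
  have h_cont : Continuous h :=
    continuous_const.add (continuous_finsetSum _ fun k _ =>
      continuous_poisson_exp_ofReal_mul_I (ha1 k))
  have h_pos : ∀ t, 0 < h t := fun t => add_pos_of_pos_of_nonneg one_pos <|
    Finset.sum_nonneg fun k _ => div_nonneg (by nlinarith [norm_nonneg (a k), ha1 k]) (sq_nonneg _)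
  have h_deriv : ∀ t, HasDerivAt (fun s : ℝ => exp (s * I) * B (exp (s * I)))
      (h t * I * (exp (t * I) * B (exp (t * I)))) t := fun t => by
    simp_rw [hB]
    refine ((hasDerivAt_exp_ofReal_mul_I t).fun_mul
      (hasDerivAt_blaschkeProduct_exp_ofReal_mul_I ha1 t)).congr_deriv ?_
    push_cast [h]
    ring
  have h_arg : ∀ t : ℝ, exp (t * I) * B (exp (t * I)) = exp ((∫ s in α..t, h s : ℝ) * I) := by
    intro t
    have hg : Continuous fun s => (h s : ℂ) * I := by fun_prop
    rw [eq_mul_exp_integral_of_hasDerivAt hg h_deriv α t, hα1, one_mul,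
      intervalIntegral.integral_mul_const, intervalIntegral.integral_ofReal]
  refine eq_two_pi_of_exp_mul_I_ne_one_on_Ioo (G := fun t => ∫ s in α..t, h s) hαβ.le
    (intervalIntegral.continuous_primitive (h_cont.intervalIntegrable ·) α).continuousOn
    intervalIntegral.integral_same
    (intervalIntegral.intervalIntegral_pos_of_pos (h_cont.intervalIntegrable α β) h_pos hαβ)
    (by rw [← h_arg, hβ1]) fun t ht => ?_
  rw [← h_arg]
  exact hcons t ht.1 ht.2

/-- For a finite Blaschke product `B` of degree `n` with zeros `|aₖ| ≤ r < 1`, if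
`e^{iα}` and `e^{iβ}` (with `α < β < α + 2π`) are consecutive solutions of
`z B(z) = 1` on the unit circle, then `∫_α^β (1 + |B'(e^{it})|) dt = 2π`. -/
theorem consecutive_prevertices_integral (n : ℕ) (r : ℝ) (hr : r < 1)
    (a : Fin n → ℂ) (ha : ∀ k, ‖a k‖ ≤ r) (B : ℂ → ℂ)
    (hB : ∀ z : ℂ, B z = ∏ k, (z - a k) / (1 - (starRingEnd ℂ) (a k) * z))
    (α β : ℝ) (hαβ : α < β) (hβ : β < α + 2 * Real.pi)
    (hα1 : Complex.exp (α * Complex.I) * B (Complex.exp (α * Complex.I)) = 1)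
    (hβ1 : Complex.exp (β * Complex.I) * B (Complex.exp (β * Complex.I)) = 1)
    (hcons : ∀ t : ℝ, α < t → t < β →
      Complex.exp (t * Complex.I) * B (Complex.exp (t * Complex.I)) ≠ 1) :
    (∫ t in α..β,
        (1 + ∑ k, (1 - ‖a k‖ ^ 2) / ‖Complex.exp (t * Complex.I) - a k‖ ^ 2))
      = 2 * Real.pi :=
  consecutive_prevertices_integral_general n r hr a ha B hB α β hαβ hα1 hβ1 hcons
end

section
/- Let B be a Blaschke product of degree n with all zeros satisfying |a_k| ≤ r < 1. If e^{iα} and e^{iβ} are consecutive solutions of zB(z) = 1 with 0 < β - α = 2θ* ≤ 2π, then θ* ≥ θ, where θ ∈ (0, π/2) is the unique root of π = θ + 2n·arctan(((1+r)/(1-r))·tan(θ/2)). -/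
/-!
On the unit circle each Blaschke factor is `exp (i ψₖ(t))` for a real phase `ψₖ` whose derivative
is the Poisson kernel `Pₖ(t) = (1 - |aₖ|²) / |e^{it} - aₖ|²`, so `z B(z) = exp (i Φ(t))` with
`Φ' = 1 + ∑ₖ Pₖ > 0`. Consecutive solutions of `z B(z) = 1` are thus exactly `2π` apart in `Φ`:
`β - α + ∑ₖ ∫_α^β Pₖ = 2π`. Among arcs of a fixed length `2θ* ≤ π`, the integral of `Pₖ` is
largest on the arc centred at `arg aₖ`, where it equals
`4 arctan ((1 + |aₖ|) / (1 - |aₖ|) tan (θ*/2))`, and this grows with `|aₖ|`. Hence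
`π ≤ θ* + 2n arctan ((1 + r) / (1 - r) tan (θ*/2))`, and the right side is increasing in `θ*`.
-/

open Complex Set ComplexConjugate

lemma hasDerivAt_integral_sub_add {E : Type*} [NormedAddCommGroup E] [NormedSpace ℝ E]
    [CompleteSpace E] {f : ℝ → E} (hf : Continuous f) (θ m : ℝ) :
    HasDerivAt (fun m => ∫ u in m - θ..m + θ, f u) (f (m + θ) - f (m - θ)) m := by
  have hF (x : ℝ) : HasDerivAt (fun y => ∫ u in 0..y, f u) (f x) x :=
    (hf.integral_hasStrictDerivAt 0 x).hasDerivAt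
  have hsplit : (fun m => ∫ u in m - θ..m + θ, f u)
      = fun m => (∫ u in 0..m + θ, f u) - ∫ u in 0..m - θ, f u := by
    funext m
    exact (intervalIntegral.integral_interval_sub_left (hf.intervalIntegrable _ _)
      (hf.intervalIntegrable _ _)).symm
  rw [hsplit]
  exact ((hF _).comp_add_const m θ).sub ((hF _).comp_sub_const m θ)

lemma Function.Periodic.le_apply_zero {J : ℝ → ℝ} {p : ℝ} (hp : 0 < p)
    (hper : Function.Periodic J p) (hmono : MonotoneOn J (Icc (-(p / 2)) 0))
    (hanti : AntitoneOn J (Icc 0 (p / 2))) (m : ℝ) : J m ≤ J 0 := by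
  obtain ⟨hlo, hhi⟩ := toIocMod_mem_Ioc hp (-(p / 2)) m
  rw [← show J (toIocMod hp (-(p / 2)) m) = J m from hper.sub_zsmul_eq _]
  rcases le_total (toIocMod hp (-(p / 2)) m) 0 with hneg | hpos
  · exact hmono ⟨hlo.le, hneg⟩ ⟨by linarith, le_rfl⟩ hneg
  · exact hanti ⟨le_rfl, by linarith⟩ ⟨hpos, by linarith⟩ hpos

lemma sub_eq_two_pi_of_consecutive {Φ : ℝ → ℝ} {α β : ℝ} (hαβ : α ≤ β)
    (hΦ : ContinuousOn Φ (Icc α β)) (hlt : Φ α < Φ β) (hα : exp (Φ α * I) = 1)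
    (hβ : exp (Φ β * I) = 1) (hne : ∀ t ∈ Ioo α β, exp (Φ t * I) ≠ 1) :
    Φ β - Φ α = 2 * Real.pi := by
  have hπ := Real.pi_pos
  obtain ⟨m, hm⟩ : ∃ m : ℤ, Φ β = Φ α + m * (2 * Real.pi) :=
    Circle.exp_eq_exp.1 (Circle.ext (by simpa [Circle.coe_exp] using hβ.trans hα.symm))
  have hm0 : 0 < m := by exact_mod_cast (show (0 : ℝ) < m by nlinarith)
  obtain rfl | hm2 : m = 1 ∨ 2 ≤ m := by omega
  · rw [hm]; push_cast; ring
  have hm2 : (2 : ℝ) ≤ m := by exact_mod_cast hm2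
  obtain ⟨t, ht, hΦt⟩ := intermediate_value_Ioo hαβ hΦ
    (show Φ α + 2 * Real.pi ∈ Ioo (Φ α) (Φ β) from ⟨by linarith, by nlinarith⟩)
  refine absurd ?_ (hne t ht)
  rw [hΦt, ofReal_add, add_mul, exp_add, hα, ofReal_mul, ofReal_ofNat, exp_two_pi_mul_I, mul_one]

lemma Complex.exp_two_mul_arctan_mul_I (x : ℝ) :
    exp (2 * Real.arctan x * I) = (1 + x * I) / (1 - x * I) := by
  have hne : (1 + x * I) / (1 - x * I) ≠ 0 := by
    refine div_ne_zero ?_ ?_ <;> intro h0 <;> simpa using congrArg re h0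
  rw [ofReal_arctan, arctan, show 2 * (-I / 2 * log ((1 + x * I) / (1 - x * I))) * I
    = -(I * I) * log ((1 + x * I) / (1 - x * I)) by ring, I_mul_I, neg_neg, one_mul, exp_log hne]

namespace Real

variable {ρ : ℝ}

-- `radialPoissonKernel ‖a‖ (t - arg a) = (1 - ‖a‖ ^ 2) / ‖exp (t * I) - a‖ ^ 2`
noncomputable def radialPoissonKernel (ρ u : ℝ) : ℝ := (1 - ρ ^ 2) / (1 - 2 * ρ * cos u + ρ ^ 2)

-- `-arctan (ρ sin u / (1 - ρ cos u))` is the argument of `1 - ρ e^{iu}`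
noncomputable def blaschkeArg (ρ u : ℝ) : ℝ := u + 2 * arctan (ρ * sin u / (1 - ρ * cos u))

lemma one_sub_mul_cos_pos (h : |ρ| < 1) (u : ℝ) : 0 < 1 - ρ * cos u := by
  have : ρ * cos u ≤ |ρ| := (le_abs_self _).trans <| by
    rw [abs_mul]; exact mul_le_of_le_one_right (abs_nonneg ρ) (abs_cos_le_one u)
  linarith

lemma one_sub_two_mul_cos_add_sq_pos (h : |ρ| < 1) (u : ℝ) : 0 < 1 - 2 * ρ * cos u + ρ ^ 2 := by
  nlinarith [one_sub_mul_cos_pos h u, sq_nonneg (ρ - cos u), cos_sq_le_one u]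

lemma radialPoissonKernel_pos (h : |ρ| < 1) (u : ℝ) : 0 < radialPoissonKernel ρ u :=
  div_pos (by nlinarith [sq_abs ρ, abs_nonneg ρ]) (one_sub_two_mul_cos_add_sq_pos h u)

lemma continuous_radialPoissonKernel (h : |ρ| < 1) : Continuous (radialPoissonKernel ρ) :=
  continuous_const.div (by fun_prop) fun u => (one_sub_two_mul_cos_add_sq_pos h u).ne'

lemma radialPoissonKernel_periodic : Function.Periodic (radialPoissonKernel ρ) (2 * π) := by
  intro u
  simp only [radialPoissonKernel, cos_add_two_pi]

lemma radialPoissonKernel_le_of_cos_le (h0 : 0 ≤ ρ) (h1 : ρ < 1) {u v : ℝ}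
    (huv : cos u ≤ cos v) : radialPoissonKernel ρ u ≤ radialPoissonKernel ρ v := by
  have := one_sub_two_mul_cos_add_sq_pos (abs_lt.2 ⟨by linarith, h1⟩) v
  unfold radialPoissonKernel
  gcongr
  nlinarith

lemma hasDerivAt_blaschkeArg (h : |ρ| < 1) (u : ℝ) :
    HasDerivAt (blaschkeArg ρ) (radialPoissonKernel ρ u) u := by
  have hpos := one_sub_mul_cos_pos h u
  have hquot : HasDerivAt (fun x => ρ * sin x / (1 - ρ * cos x))
      ((ρ * cos u * (1 - ρ * cos u) - ρ * sin u * (ρ * sin u)) / (1 - ρ * cos u) ^ 2) u := by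
    refine ((hasDerivAt_sin u).const_mul ρ).div ?_ hpos.ne'
    simpa using ((hasDerivAt_cos u).const_mul ρ).const_sub 1
  refine ((hasDerivAt_id' u).add (hquot.arctan.const_mul 2)).congr_deriv ?_
  have hden : 1 - 2 * ρ * cos u + ρ ^ 2 = (1 - ρ * cos u) ^ 2 + (ρ * sin u) ^ 2 := by
    nlinarith [sin_sq_add_cos_sq u]
  rw [radialPoissonKernel, hden]
  field_simp
  nlinarith [sin_sq_add_cos_sq u]

lemma continuous_blaschkeArg (h : |ρ| < 1) : Continuous (blaschkeArg ρ) :=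
  continuous_iff_continuousAt.2 fun u => (hasDerivAt_blaschkeArg h u).continuousAt

lemma integral_radialPoissonKernel_eq_sub (h : |ρ| < 1) (a b : ℝ) :
    ∫ u in a..b, radialPoissonKernel ρ u = blaschkeArg ρ b - blaschkeArg ρ a :=
  intervalIntegral.integral_eq_sub_of_hasDerivAt (fun u _ => hasDerivAt_blaschkeArg h u)
    ((continuous_radialPoissonKernel h).intervalIntegrable _ _)

lemma hasDerivAt_two_mul_arctan_tan_half (h : |ρ| < 1) {u : ℝ} (hu : u ∈ Ioo (-π) π) :
    HasDerivAt (fun x => 2 * arctan ((1 + ρ) / (1 - ρ) * tan (x / 2)))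
      (radialPoissonKernel ρ u) u := by
  obtain ⟨hρ0, hρ1⟩ := abs_lt.1 h
  have hcos : 0 < cos (u / 2) := cos_pos_of_mem_Ioo ⟨by linarith [hu.1], by linarith [hu.2]⟩
  have htan : HasDerivAt (fun x => tan (x / 2)) (1 / cos (u / 2) ^ 2 * (1 / 2)) u :=
    HasDerivAt.comp (h₂ := tan) u (hasDerivAt_tan hcos.ne') ((hasDerivAt_id' u).div_const 2)
  refine (((htan.const_mul ((1 + ρ) / (1 - ρ))).arctan).const_mul 2).congr_deriv ?_
  have hden : 1 - 2 * ρ * cos u + ρ ^ 2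
      = (1 - ρ) ^ 2 * cos (u / 2) ^ 2 + (1 + ρ) ^ 2 * sin (u / 2) ^ 2 := by
    have := cos_two_mul (u / 2)
    rw [mul_div_cancel₀ u two_ne_zero] at this
    nlinarith [sin_sq_add_cos_sq (u / 2)]
  have hden_pos := one_sub_two_mul_cos_add_sq_pos h u
  rw [radialPoissonKernel, tan_eq_sin_div_cos, hden]
  rw [hden] at hden_pos
  have : 1 - ρ ≠ 0 := by linarith
  field_simp
  ring

lemma integral_radialPoissonKernel_neg_self (h : |ρ| < 1) {θ : ℝ} (hθ0 : 0 ≤ θ) (hθ : θ < π) :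
    ∫ u in -θ..θ, radialPoissonKernel ρ u = 4 * arctan ((1 + ρ) / (1 - ρ) * tan (θ / 2)) := by
  rw [intervalIntegral.integral_eq_sub_of_hasDerivAt
    (fun x hx => hasDerivAt_two_mul_arctan_tan_half h ?_)
    ((continuous_radialPoissonKernel h).intervalIntegrable _ _)]
  · rw [neg_div, tan_neg, mul_neg, arctan_neg]
    ring
  · rw [uIcc_of_le (by linarith)] at hx
    exact ⟨by linarith [hx.1], by linarith [hx.2]⟩

lemma integral_radialPoissonKernel_arc_le (h0 : 0 ≤ ρ) (h1 : ρ < 1) {θ : ℝ} (hθ0 : 0 ≤ θ)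
    (hθ : θ ≤ π) (m : ℝ) :
    ∫ u in m - θ..m + θ, radialPoissonKernel ρ u ≤ ∫ u in -θ..θ, radialPoissonKernel ρ u := by
  have hJ' := hasDerivAt_integral_sub_add
    (continuous_radialPoissonKernel (abs_lt.2 ⟨by linarith, h1⟩)) θ
  have hsinθ : 0 ≤ sin θ := sin_nonneg_of_nonneg_of_le_pi hθ0 hθ
  have hcos (x : ℝ) : cos (x - θ) - cos (x + θ) = 2 * sin x * sin θ := by
    rw [cos_sub, cos_add]; ring
  have hper : Function.Periodic
      (fun m => ∫ u in m - θ..m + θ, radialPoissonKernel ρ u) (2 * π) := by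
    intro m
    simp only [show m + 2 * π - θ = m - θ + 2 * π by ring,
      show m + 2 * π + θ = m + θ + 2 * π by ring,
      ← intervalIntegral.integral_comp_add_right, radialPoissonKernel_periodic _]
  have hmono : MonotoneOn (fun m => ∫ u in m - θ..m + θ, radialPoissonKernel ρ u)
      (Icc (-π) 0) := by
    refine monotoneOn_of_hasDerivWithinAt_nonneg (convex_Icc _ _)
      (fun x _ => (hJ' x).continuousAt.continuousWithinAt) (fun x _ => (hJ' x).hasDerivWithinAt)
      fun x hx => sub_nonneg.2 (radialPoissonKernel_le_of_cos_le h0 h1 ?_)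
    rw [interior_Icc] at hx
    nlinarith [hcos x, sin_nonpos_of_nonpos_of_neg_pi_le hx.2.le hx.1.le]
  have hanti : AntitoneOn (fun m => ∫ u in m - θ..m + θ, radialPoissonKernel ρ u)
      (Icc 0 π) := by
    refine antitoneOn_of_hasDerivWithinAt_nonpos (convex_Icc _ _)
      (fun x _ => (hJ' x).continuousAt.continuousWithinAt) (fun x _ => (hJ' x).hasDerivWithinAt)
      fun x hx => sub_nonpos.2 (radialPoissonKernel_le_of_cos_le h0 h1 ?_)
    rw [interior_Icc] at hx
    nlinarith [hcos x, sin_nonneg_of_nonneg_of_le_pi hx.1.le hx.2.le]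
  simpa using hper.le_apply_zero two_pi_pos (by simpa using hmono) (by simpa using hanti) m

lemma integral_radialPoissonKernel_le {r a b : ℝ} (h0 : 0 ≤ ρ) (hρr : ρ ≤ r) (hr : r < 1)
    (hab : a ≤ b) (hba : b - a ≤ π) :
    ∫ u in a..b, radialPoissonKernel ρ u ≤ 4 * arctan ((1 + r) / (1 - r) * tan ((b - a) / 4)) := by
  have hρ : |ρ| < 1 := abs_lt.2 ⟨by linarith, by linarith⟩
  have := pi_pos
  have htan : 0 ≤ tan ((b - a) / 4) :=
    tan_nonneg_of_nonneg_of_le_pi_div_two (by linarith) (by linarith)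
  calc ∫ u in a..b, radialPoissonKernel ρ u
      = ∫ u in (a + b) / 2 - (b - a) / 2..(a + b) / 2 + (b - a) / 2, radialPoissonKernel ρ u := by
        congr 1 <;> ring
    _ ≤ ∫ u in -((b - a) / 2)..(b - a) / 2, radialPoissonKernel ρ u :=
        integral_radialPoissonKernel_arc_le h0 (by linarith) (by linarith) (by linarith) _
    _ = 4 * arctan ((1 + ρ) / (1 - ρ) * tan ((b - a) / 4)) := by
        rw [integral_radialPoissonKernel_neg_self hρ (by linarith) (by linarith)]
        ring_nf
    _ ≤ 4 * arctan ((1 + r) / (1 - r) * tan ((b - a) / 4)) := by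
        gcongr
        linarith

end Real

open Real (blaschkeArg radialPoissonKernel)

lemma exp_blaschkeArg_mul_I {ρ : ℝ} (h : |ρ| < 1) (u : ℝ) :
    exp (blaschkeArg ρ u * I) = (exp (u * I) - ρ) / (1 - ρ * exp (u * I)) := by
  have hc : ((1 - ρ * Real.cos u : ℝ) : ℂ) ≠ 0 :=
    ofReal_ne_zero.2 (Real.one_sub_mul_cos_pos h u).ne'
  set x := ρ * Real.sin u / (1 - ρ * Real.cos u) with hx
  have hplus : (1 + x * I) * (1 - ρ * Real.cos u : ℝ) = 1 - ρ * exp (-u * I) := by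
    rw [hx, exp_mul_I, cos_neg, sin_neg]
    push_cast at hc ⊢
    field_simp
    ring
  have hminus : (1 - x * I) * (1 - ρ * Real.cos u : ℝ) = 1 - ρ * exp (u * I) := by
    rw [hx, exp_mul_I]
    push_cast at hc ⊢
    field_simp
    ring
  rw [blaschkeArg, ofReal_add, add_mul, exp_add, ofReal_mul, ofReal_ofNat,
    exp_two_mul_arctan_mul_I, ← mul_div_mul_right _ _ hc, hplus, hminus, mul_div_assoc',
    mul_sub, mul_one, mul_left_comm, ← exp_add, neg_mul, add_neg_cancel, exp_zero, mul_one]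

lemma blaschkeFactor_exp_mul_I {a : ℂ} (ha : ‖a‖ < 1) (t : ℝ) :
    (exp (t * I) - a) / (1 - conj a * exp (t * I))
      = exp ((blaschkeArg ‖a‖ (t - arg a) + arg a : ℝ) * I) := by
  have hρ : |‖a‖| < 1 := by rwa [abs_norm]
  have hconj : conj a = ‖a‖ * exp (-(arg a * I)) := by
    conv_lhs => rw [← norm_mul_exp_arg_mul_I a]
    rw [map_mul, ← exp_conj, map_mul, conj_ofReal, conj_ofReal, conj_I, mul_neg]
  have ht : exp (t * I) = exp ((t - arg a : ℝ) * I) * exp (arg a * I) := by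
    rw [← exp_add]; push_cast; ring_nf
  have hnum : exp (t * I) - a = (exp ((t - arg a : ℝ) * I) - ‖a‖) * exp (arg a * I) := by
    rw [ht, sub_mul]
    congr 1
    exact (norm_mul_exp_arg_mul_I a).symm
  have hden : 1 - conj a * exp (t * I) = 1 - ‖a‖ * exp ((t - arg a : ℝ) * I) := by
    rw [hconj, ht, mul_assoc, ← mul_assoc (exp _), mul_comm (exp _), mul_assoc, ← exp_add,
      neg_add_cancel, exp_zero, mul_one]
  rw [hnum, hden, ofReal_add, add_mul, exp_add, exp_blaschkeArg_mul_I hρ, div_mul_eq_mul_div]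

section BlaschkeProduct

variable {ι : Type*} [Fintype ι] {a : ι → ℂ}

noncomputable def blaschkeProduct (a : ι → ℂ) (z : ℂ) : ℂ :=
  ∏ k, (z - a k) / (1 - conj (a k) * z)

noncomputable def blaschkeProductArg (a : ι → ℂ) (t : ℝ) : ℝ :=
  ∑ k, (blaschkeArg ‖a k‖ (t - arg (a k)) + arg (a k))

lemma exp_blaschkeProductArg_mul_I (ha : ∀ k, ‖a k‖ < 1) (t : ℝ) :
    exp (blaschkeProductArg a t * I) = blaschkeProduct a (exp (t * I)) := by
  rw [blaschkeProductArg, ofReal_sum, Finset.sum_mul, exp_sum, blaschkeProduct]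
  exact Finset.prod_congr rfl fun k _ => (blaschkeFactor_exp_mul_I (ha k) t).symm

lemma continuous_blaschkeProductArg (ha : ∀ k, ‖a k‖ < 1) : Continuous (blaschkeProductArg a) := by
  refine continuous_finsetSum _ fun k _ => Continuous.add ?_ continuous_const
  exact (Real.continuous_blaschkeArg (by simpa using ha k)).comp (continuous_sub_right _)

lemma blaschkeProductArg_sub (ha : ∀ k, ‖a k‖ < 1) (α β : ℝ) :
    blaschkeProductArg a β - blaschkeProductArg a α
      = ∑ k, ∫ t in α..β, radialPoissonKernel ‖a k‖ (t - arg (a k)) := by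
  rw [blaschkeProductArg, blaschkeProductArg, ← Finset.sum_sub_distrib]
  refine Finset.sum_congr rfl fun k _ => ?_
  rw [intervalIntegral.integral_comp_sub_right,
    Real.integral_radialPoissonKernel_eq_sub (by simpa using ha k)]
  ring

lemma sub_add_sum_integral_radialPoissonKernel_eq_two_pi (ha : ∀ k, ‖a k‖ < 1) {α β : ℝ}
    (hαβ : α < β) (hα : exp (α * I) * blaschkeProduct a (exp (α * I)) = 1)
    (hβ : exp (β * I) * blaschkeProduct a (exp (β * I)) = 1)
    (hcons : ∀ t : ℝ, α < t → t < β → exp (t * I) * blaschkeProduct a (exp (t * I)) ≠ 1) :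
    β - α + ∑ k, ∫ t in α..β, radialPoissonKernel ‖a k‖ (t - arg (a k)) = 2 * Real.pi := by
  have hexp (t : ℝ) : exp ((t + blaschkeProductArg a t : ℝ) * I)
      = exp (t * I) * blaschkeProduct a (exp (t * I)) := by
    rw [ofReal_add, add_mul, exp_add, exp_blaschkeProductArg_mul_I ha]
  have hnonneg : 0 ≤ ∑ k, ∫ t in α..β, radialPoissonKernel ‖a k‖ (t - arg (a k)) :=
    Finset.sum_nonneg fun k _ => intervalIntegral.integral_nonneg hαβ.le fun t _ =>
      (Real.radialPoissonKernel_pos (by simpa using ha k) _).le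
  rw [← blaschkeProductArg_sub ha] at hnonneg ⊢
  have := sub_eq_two_pi_of_consecutive (Φ := fun t => t + blaschkeProductArg a t) hαβ.le
    (continuous_id.add (continuous_blaschkeProductArg ha)).continuousOn (by linarith)
    ((hexp α).trans hα) ((hexp β).trans hβ) fun t ht => (hexp t).trans_ne (hcons t ht.1 ht.2)
  linarith

end BlaschkeProduct

theorem min_separation_prevertices_general (n : ℕ) (r : ℝ) (hr0 : 0 ≤ r) (hr : r < 1)
    (a : Fin n → ℂ) (ha : ∀ k, ‖a k‖ ≤ r) (B : ℂ → ℂ)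
    (hB : ∀ z : ℂ, B z = ∏ k, (z - a k) / (1 - (starRingEnd ℂ) (a k) * z))
    (α β : ℝ) (hαβ : α < β)
    (hα1 : Complex.exp (α * Complex.I) * B (Complex.exp (α * Complex.I)) = 1)
    (hβ1 : Complex.exp (β * Complex.I) * B (Complex.exp (β * Complex.I)) = 1)
    (hcons : ∀ t : ℝ, α < t → t < β →
      Complex.exp (t * Complex.I) * B (Complex.exp (t * Complex.I)) ≠ 1)
    (θ : ℝ) (hθ : θ ∈ Set.Ioo 0 (Real.pi / 2))
    (hroot : Real.pi = θ + 2 * n * Real.arctan ((1 + r) / (1 - r) * Real.tan (θ / 2))) :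
    θ ≤ (β - α) / 2 := by
  by_contra! hlt
  obtain rfl : B = blaschkeProduct a := funext hB
  have h2π := sub_add_sum_integral_radialPoissonKernel_eq_two_pi
    (fun k => (ha k).trans_lt hr) hαβ hα1 hβ1 hcons
  have harc (k : Fin n) : ∫ t in α..β, radialPoissonKernel ‖a k‖ (t - arg (a k))
      ≤ 4 * Real.arctan ((1 + r) / (1 - r) * Real.tan ((β - α) / 4)) := by
    rw [intervalIntegral.integral_comp_sub_right]
    simpa only [sub_sub_sub_cancel_right] using Real.integral_radialPoissonKernel_le
      (norm_nonneg _) (ha k) hr (a := α - arg (a k)) (b := β - arg (a k)) (by linarith)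
      (by linarith [hθ.2])
  have hmono : Real.arctan ((1 + r) / (1 - r) * Real.tan ((β - α) / 4))
      ≤ Real.arctan ((1 + r) / (1 - r) * Real.tan (θ / 2)) := by
    refine Real.arctan_strictMono.monotone (mul_le_mul_of_nonneg_left ?_ ?_)
    · exact (Real.tan_lt_tan_of_lt_of_lt_pi_div_two (by linarith [Real.pi_pos]) (by linarith [hθ.2])
        (by linarith)).le
    · exact div_nonneg (by linarith) (by linarith)
  have hsum := Finset.sum_le_sum fun k (_ : k ∈ Finset.univ) => harc k
  rw [Finset.sum_const, Finset.card_univ, Fintype.card_fin, nsmul_eq_mul] at hsum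
  linarith [mul_le_mul_of_nonneg_left hmono (Nat.cast_nonneg (α := ℝ) n)]

/-- Minimum separation of pre-vertices: if `e^{iα}, e^{iβ}` are consecutive solutions of
`z B(z) = 1` with `0 < β - α = 2θ* ≤ 2π`, where `B` is a Blaschke product of degree `n`
with zeros `|aₖ| ≤ r < 1`, then `θ* ≥ θ`, the unique root in `(0, π/2)` of
`π = θ + 2n arctan(((1+r)/(1-r)) tan(θ/2))`. -/
theorem min_separation_prevertices (n : ℕ) (r : ℝ) (hr0 : 0 ≤ r) (hr : r < 1)
    (a : Fin n → ℂ) (ha : ∀ k, ‖a k‖ ≤ r) (B : ℂ → ℂ)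
    (hB : ∀ z : ℂ, B z = ∏ k, (z - a k) / (1 - (starRingEnd ℂ) (a k) * z))
    (α β : ℝ) (hαβ : α < β) (hβ : β ≤ α + 2 * Real.pi)
    (hα1 : Complex.exp (α * Complex.I) * B (Complex.exp (α * Complex.I)) = 1)
    (hβ1 : Complex.exp (β * Complex.I) * B (Complex.exp (β * Complex.I)) = 1)
    (hcons : ∀ t : ℝ, α < t → t < β →
      Complex.exp (t * Complex.I) * B (Complex.exp (t * Complex.I)) ≠ 1)
    (θ : ℝ) (hθ : θ ∈ Set.Ioo 0 (Real.pi / 2))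
    (hroot : Real.pi = θ + 2 * n * Real.arctan ((1 + r) / (1 - r) * Real.tan (θ / 2))) :
    θ ≤ (β - α) / 2 :=
  min_separation_prevertices_general n r hr0 hr a ha B hB α β hαβ hα1 hβ1 hcons θ hθ hroot
end
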